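/- arXiv:2009.08520 — 6 statements merged into one kernel-verified Lean document; each statement's English description precedes it below -/
import Mathlib

section
/- For every integer n ≥ 1 and every k ≥ 0, the homomorphism Z̄^n_k → (R_n)_{2k} sending the class of the symbol X_I to the residue class of the monomial X_I in R_n is well defined and is an isomorphism of abelian groups. In other words, the degree-2k component of R_n is generated by the squarefree monomials X_I with |I| = k, subject precisely to the linear relations Σ_{|I|=k, I⊇J} X_I = 0 for all subsets J ⊆ {1,…,2n} with |J| < k. -/
/-!
Context: For n ≥ 1, R_n = ℤ[X_1,…,X_{2n}]/I_n where I_n is generated by the X_i^2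
and the elementary symmetric polynomials Σ_{|I|=k} X_I, k = 1,…,2n.  With the grading
deg X_i = 2, the degree-2k component of R_n is the image of the space of homogeneous
polynomials of (standard) degree k.  Z^n_k is the free abelian group on the k-element
subsets I ⊆ {1,…,2n}, and Z̄^n_k its quotient by the subgroup generated by the elements
Σ_{|I|=k, I⊇J} X_I for |J| < k.

Statement 0:  The homomorphism Z̄^n_k → (R_n)_{2k}, [X_I] ↦ [monomial X_I], is well
defined and an isomorphism of abelian groups.  Equivalently, for the lift
φ : Z^n_k → R_n, the kernel of φ is exactly the relations subgroup and the range of φ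
is exactly the degree-2k component of R_n.
-/

open MvPolynomial

noncomputable section

/-- The ideal I_n generated by the squares of the variables and the elementary
symmetric polynomials in 2n variables. -/
def relIdeal (n : ℕ) : Ideal (MvPolynomial (Fin (2 * n)) ℤ) :=
  Ideal.span
    ((Set.range fun i : Fin (2 * n) => (X i : MvPolynomial (Fin (2 * n)) ℤ) ^ 2) ∪
      {p | ∃ k : ℕ, 1 ≤ k ∧ k ≤ 2 * n ∧
        p = ∑ I ∈ Finset.powersetCard k (Finset.univ : Finset (Fin (2 * n))), ∏ i ∈ I, X i})

/-- The ring R_n = ℤ[X_1,…,X_{2n}]/I_n. -/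
abbrev Rn (n : ℕ) := MvPolynomial (Fin (2 * n)) ℤ ⧸ relIdeal n

/-- The degree-2k homogeneous component of R_n (deg X_i = 2): the image of the
homogeneous polynomials of standard degree k. -/
def component (n k : ℕ) : AddSubgroup (Rn n) :=
  AddSubgroup.map (Ideal.Quotient.mk (relIdeal n)).toAddMonoidHom
    (homogeneousSubmodule (Fin (2 * n)) ℤ k).toAddSubgroup

/-- k-element subsets of {1,…,2n}. -/
abbrev SubK (n k : ℕ) := {I : Finset (Fin (2 * n)) // I.card = k}

/-- Z^n_k: the free abelian group on the symbols X_I, |I| = k. -/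
abbrev Zgp (n k : ℕ) := FreeAbelianGroup (SubK n k)

/-- The homomorphism Z^n_k → R_n sending the symbol X_I to the class of the
monomial X_I = ∏_{i∈I} X_i. -/
def phi (n k : ℕ) : Zgp n k →+ Rn n :=
  FreeAbelianGroup.lift fun I => Ideal.Quotient.mk (relIdeal n) (∏ i ∈ I.1, X i)

/-- The relations subgroup of Z^n_k: generated by Σ_{|I|=k, I⊇J} X_I over all
subsets J with |J| < k. -/
def relSub (n k : ℕ) : AddSubgroup (Zgp n k) :=
  AddSubgroup.closure
    {z | ∃ J : Finset (Fin (2 * n)), J.card < k ∧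
      z = ∑ I ∈ Finset.univ.filter (fun I : SubK n k => J ⊆ I.1), FreeAbelianGroup.of I}

/-!
Reading off the coefficients of the squarefree monomials `X_I`, `|I| = k`, gives a left inverse
`ζ` of the lift `Z^n_k → ℤ[X]`.  It kills every multiple of a square `X_i ^ 2`, and it sends
`X_J * e_r` to the relation `Σ_{I ⊇ J} X_I` when `|J| + r = k` and to `0` otherwise; hence
`ζ` maps `I_n` into the relations, which gives `ker φ ⊆ relations`.  Conversely `φ ∘ ζ` is
reduction modulo `I_n` of the degree-`k` part, because non-squarefree monomials lie in `I_n`.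
Applied to `X_J * e_{k - |J|} ∈ I_n` this shows that the relations lie in `ker φ`, and applied
to homogeneous polynomials it shows that `φ` is onto the degree-`2k` component.
-/

section SquarefreeExponent

variable {σ : Type*}

def sqfreeExponent (I : Finset σ) : σ →₀ ℕ :=
  ∑ i ∈ I, Finsupp.single i 1

theorem sqfreeExponent_apply [DecidableEq σ] (I : Finset σ) (i : σ) :
    sqfreeExponent I i = if i ∈ I then 1 else 0 := by
  simp [sqfreeExponent, Finsupp.finsetSum_apply, Finsupp.single_apply]

theorem sqfreeExponent_le_one [DecidableEq σ] (I : Finset σ) (i : σ) :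
    sqfreeExponent I i ≤ 1 := by
  rw [sqfreeExponent_apply]; split_ifs <;> simp

@[simp]
theorem support_sqfreeExponent [DecidableEq σ] (I : Finset σ) :
    (sqfreeExponent I).support = I := by
  ext i; simp [sqfreeExponent_apply]

theorem sqfreeExponent_injective : Function.Injective (sqfreeExponent (σ := σ)) := fun I J h => by
  classical
  rw [← support_sqfreeExponent I, h, support_sqfreeExponent]

@[simp]
theorem degree_sqfreeExponent (I : Finset σ) : (sqfreeExponent I).degree = I.card := by
  simp [sqfreeExponent, map_sum, Finsupp.degree_single]

theorem sqfreeExponent_le_iff [DecidableEq σ] {I J : Finset σ} :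
    sqfreeExponent J ≤ sqfreeExponent I ↔ J ⊆ I := by
  simp only [Finsupp.le_def, sqfreeExponent_apply]
  refine ⟨fun h i hi => by_contra fun hI => by simpa [hi, hI] using h i, fun h i => ?_⟩
  by_cases hi : i ∈ J
  · simp [hi, h hi]
  · simp [hi]

theorem sqfreeExponent_sub_of_subset [DecidableEq σ] {I J : Finset σ} (h : J ⊆ I) :
    sqfreeExponent I - sqfreeExponent J = sqfreeExponent (I \ J) := by
  ext i
  simp only [Finsupp.tsub_apply, sqfreeExponent_apply, Finset.mem_sdiff]
  by_cases hi : i ∈ J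
  · simp [hi, h hi]
  · simp [hi]

theorem eq_sqfreeExponent_support_or_exists_two_le [DecidableEq σ] (m : σ →₀ ℕ) :
    m = sqfreeExponent m.support ∨ ∃ i, 2 ≤ m i := by
  refine (em (∀ i, m i ≤ 1)).imp (fun h => ?_) (fun h => ?_)
  · ext i
    have := h i
    simp only [sqfreeExponent_apply, Finsupp.mem_support_iff]
    split_ifs <;> omega
  · push Not at h
    exact h.imp fun _ => id

theorem prod_X_eq_monomial_sqfreeExponent {R : Type*} [CommSemiring R] (I : Finset σ) :
    ∏ i ∈ I, (X i : MvPolynomial σ R) = monomial (sqfreeExponent I) 1 := by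
  simp only [sqfreeExponent, monomial_sum_one, X]

theorem coeff_sqfreeExponent_esymm [Fintype σ] {R : Type*} [CommSemiring R] (T : Finset σ)
    (r : ℕ) :
    coeff (sqfreeExponent T) (esymm σ R r) = if T.card = r then 1 else 0 := by
  classical
  simp only [esymm, prod_X_eq_monomial_sqfreeExponent, coeff_sum, coeff_monomial]
  simp [sqfreeExponent_injective.eq_iff, Finset.mem_powersetCard]

theorem isHomogeneous_esymm [Fintype σ] (R : Type*) [CommSemiring R] (r : ℕ) :
    (esymm σ R r).IsHomogeneous r :=
  IsHomogeneous.sum _ _ _ fun S hS => by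
    rw [prod_X_eq_monomial_sqfreeExponent]
    exact isHomogeneous_monomial 1
      ((degree_sqfreeExponent S).trans (Finset.mem_powersetCard.mp hS).2)

end SquarefreeExponent

section SquarefreeCoefficients

variable {σ : Type*} (k : ℕ)

def subsetMonomials : FreeAbelianGroup {I : Finset σ // I.card = k} →+ MvPolynomial σ ℤ :=
  FreeAbelianGroup.lift fun I => ∏ i ∈ I.1, X i

theorem subsetMonomials_mem_homogeneousSubmodule
    (z : FreeAbelianGroup {I : Finset σ // I.card = k}) :
    subsetMonomials k z ∈ homogeneousSubmodule σ ℤ k := by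
  induction z using FreeAbelianGroup.induction_on with
  | zero => exact zero_mem _
  | of I =>
    rw [subsetMonomials, FreeAbelianGroup.lift_apply_of, prod_X_eq_monomial_sqfreeExponent]
    exact isHomogeneous_monomial 1 ((degree_sqfreeExponent I.1).trans I.2)
  | neg I h => rw [map_neg]; exact neg_mem h
  | add z w hz hw => rw [map_add]; exact add_mem hz hw

variable [Fintype σ]

def sqfreeCoeffs : MvPolynomial σ ℤ →+ FreeAbelianGroup {I : Finset σ // I.card = k} where
  toFun p := ∑ I, coeff (sqfreeExponent I.1) p • FreeAbelianGroup.of I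
  map_zero' := by simp
  map_add' p q := by simp [add_smul, Finset.sum_add_distrib]

theorem sqfreeCoeffs_apply (p : MvPolynomial σ ℤ) :
    sqfreeCoeffs k p = ∑ I, coeff (sqfreeExponent I.1) p • FreeAbelianGroup.of I :=
  rfl

theorem sqfreeCoeffs_monomial_sqfreeExponent (T : Finset σ) (a : ℤ) :
    sqfreeCoeffs k (monomial (sqfreeExponent T) a) =
      if h : T.card = k then a • FreeAbelianGroup.of ⟨T, h⟩ else 0 := by
  classical
  simp only [sqfreeCoeffs_apply, coeff_monomial, sqfreeExponent_injective.eq_iff]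
  split_ifs with h
  · refine (Fintype.sum_eq_single ⟨T, h⟩ fun I hI => ?_).trans (by rw [if_pos rfl])
    rw [if_neg fun hT => hI (Subtype.ext hT.symm), zero_smul]
  · refine Finset.sum_eq_zero fun I _ => ?_
    rw [if_neg fun hT : T = I.1 => h (hT ▸ I.2), zero_smul]

theorem sqfreeCoeffs_monomial_mul_of_two_le {s : σ →₀ ℕ} {i : σ} (hs : 2 ≤ s i) (a : ℤ)
    (p : MvPolynomial σ ℤ) : sqfreeCoeffs k (monomial s a * p) = 0 := by
  classical
  refine Finset.sum_eq_zero fun I _ => ?_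
  have : ¬ s ≤ sqfreeExponent I.1 := fun h => by
    have := (h i).trans (sqfreeExponent_le_one I.1 i); omega
  rw [coeff_monomial_mul', if_neg this, zero_smul]

theorem sqfreeCoeffs_monomial_mul_esymm [DecidableEq σ] (J : Finset σ) (r : ℕ) :
    sqfreeCoeffs k (monomial (sqfreeExponent J) 1 * esymm σ ℤ r) =
      if J.card + r = k then ∑ I with J ⊆ I.1, FreeAbelianGroup.of I else 0 := by
  have hcoeff : ∀ I : {I : Finset σ // I.card = k},
      coeff (sqfreeExponent I.1) (monomial (sqfreeExponent J) 1 * esymm σ ℤ r) =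
        if J ⊆ I.1 ∧ J.card + r = k then 1 else 0 := by
    intro I
    rw [coeff_monomial_mul']
    by_cases hJI : J ⊆ I.1
    · have : J.card ≤ k := I.2 ▸ Finset.card_le_card hJI
      rw [if_pos (sqfreeExponent_le_iff.mpr hJI), sqfreeExponent_sub_of_subset hJI,
        coeff_sqfreeExponent_esymm, Finset.card_sdiff_of_subset hJI, I.2, one_mul]
      simp only [hJI, true_and]
      exact if_congr (by omega) rfl rfl
    · rw [if_neg (mt sqfreeExponent_le_iff.mp hJI), if_neg fun h => hJI h.1]
  simp only [sqfreeCoeffs_apply, hcoeff, ite_smul, one_smul, zero_smul]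
  split_ifs with h
  · simp [h, Finset.sum_filter]
  · simp [h]

theorem sqfreeCoeffs_subsetMonomials (z : FreeAbelianGroup {I : Finset σ // I.card = k}) :
    sqfreeCoeffs k (subsetMonomials k z) = z := by
  suffices (sqfreeCoeffs k).comp (subsetMonomials k) = AddMonoidHom.id _ from
    DFunLike.congr_fun this z
  ext I
  simp [subsetMonomials, prod_X_eq_monomial_sqfreeExponent, sqfreeCoeffs_monomial_sqfreeExponent,
    I.2]

end SquarefreeCoefficients

section RelationRing

variable {n k : ℕ}

theorem X_sq_mem_relIdeal (i : Fin (2 * n)) : X i ^ 2 ∈ relIdeal n :=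
  Ideal.subset_span (Or.inl ⟨i, rfl⟩)

theorem monomial_mem_relIdeal_of_two_le {s : Fin (2 * n) →₀ ℕ} {i : Fin (2 * n)}
    (hs : 2 ≤ s i) (a : ℤ) : monomial s a ∈ relIdeal n := by
  refine Ideal.mem_of_dvd _ ?_ (X_sq_mem_relIdeal i)
  rw [X_pow_eq_monomial, monomial_dvd_monomial]
  exact ⟨Or.inr (Finsupp.single_le_iff.mpr hs), one_dvd a⟩

theorem esymm_mem_relIdeal {r : ℕ} (hr : 1 ≤ r) : esymm (Fin (2 * n)) ℤ r ∈ relIdeal n := by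
  rcases le_or_gt r (2 * n) with h | h
  · exact Ideal.subset_span (Or.inr ⟨r, hr, h, rfl⟩)
  · rw [esymm, Finset.powersetCard_eq_empty.mpr (by simpa using h), Finset.sum_empty]
    exact zero_mem _

theorem sqfreeCoeffs_mul_esymm_mem_relSub {r : ℕ} (hr : 1 ≤ r)
    (q : MvPolynomial (Fin (2 * n)) ℤ) :
    sqfreeCoeffs k (q * esymm _ ℤ r) ∈ relSub n k := by
  induction q using MvPolynomial.induction_on' with
  | add p q hp hq => rw [add_mul, map_add]; exact add_mem hp hq
  | monomial s a =>
    rcases eq_sqfreeExponent_support_or_exists_two_le s with hs | ⟨i, hi⟩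
    · have hsmul : monomial s a = a • monomial (sqfreeExponent s.support) 1 := by
        rw [smul_monomial, smul_eq_mul, mul_one, ← hs]
      rw [hsmul, smul_mul_assoc, map_zsmul, sqfreeCoeffs_monomial_mul_esymm]
      refine zsmul_mem ?_ a
      split_ifs with h
      · exact AddSubgroup.subset_closure ⟨_, by omega, rfl⟩
      · exact zero_mem _
    · rw [sqfreeCoeffs_monomial_mul_of_two_le k hi]
      exact zero_mem _

theorem sqfreeCoeffs_mem_relSub {p : MvPolynomial (Fin (2 * n)) ℤ} (hp : p ∈ relIdeal n) :
    sqfreeCoeffs k p ∈ relSub n k := by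
  suffices ∀ q, sqfreeCoeffs k (q * p) ∈ relSub n k by simpa using this 1
  induction hp using Submodule.span_induction with
  | mem g hg =>
    rcases hg with ⟨i, rfl⟩ | ⟨r, hr, -, rfl⟩
    · intro q
      beta_reduce
      rw [mul_comm q, X_pow_eq_monomial, sqfreeCoeffs_monomial_mul_of_two_le k (i := i) (by simp)]
      exact zero_mem _
    · exact sqfreeCoeffs_mul_esymm_mem_relSub hr
  | zero => simp
  | add x y _ _ hx hy => intro q; rw [mul_add, map_add]; exact add_mem (hx q) (hy q)
  | smul a x _ hx => intro q; rw [smul_eq_mul, ← mul_assoc]; exact hx _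

theorem phi_apply (z : Zgp n k) :
    phi n k z = Ideal.Quotient.mk (relIdeal n) (subsetMonomials k z) :=
  FreeAbelianGroup.lift_comp_apply (g := (Ideal.Quotient.mk (relIdeal n)).toAddMonoidHom) z _

theorem phi_sqfreeCoeffs (p : MvPolynomial (Fin (2 * n)) ℤ) :
    phi n k (sqfreeCoeffs k p) = Ideal.Quotient.mk (relIdeal n) (homogeneousComponent k p) := by
  induction p using MvPolynomial.induction_on' with
  | add p q hp hq => rw [map_add, map_add, hp, hq, map_add, map_add]
  | monomial s a =>
    rw [homogeneousComponent_of_mem (isHomogeneous_monomial a rfl)]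
    rcases eq_sqfreeExponent_support_or_exists_two_le s with hs | ⟨i, hi⟩
    · rw [hs, sqfreeCoeffs_monomial_sqfreeExponent, degree_sqfreeExponent]
      by_cases h : s.support.card = k
      · rw [dif_pos h, if_pos h.symm, map_zsmul, phi_apply, subsetMonomials,
          FreeAbelianGroup.lift_apply_of, prod_X_eq_monomial_sqfreeExponent, ← map_zsmul,
          smul_monomial, smul_eq_mul, mul_one]
      · rw [dif_neg h, if_neg (Ne.symm h), map_zero, map_zero]
    · rw [← mul_one (monomial s a), sqfreeCoeffs_monomial_mul_of_two_le k hi, map_zero, mul_one]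
      split_ifs
      · exact (Ideal.Quotient.eq_zero_iff_mem.mpr (monomial_mem_relIdeal_of_two_le hi a)).symm
      · rw [map_zero]

theorem ker_phi : (phi n k).ker = relSub n k := by
  refine le_antisymm (fun z hz => ?_) ?_
  · rw [AddMonoidHom.mem_ker, phi_apply, Ideal.Quotient.eq_zero_iff_mem] at hz
    simpa only [sqfreeCoeffs_subsetMonomials] using sqfreeCoeffs_mem_relSub (k := k) hz
  · rw [relSub, AddSubgroup.closure_le]
    rintro _ ⟨J, hJ, rfl⟩
    have hdeg : J.card + (k - J.card) = k := by omega
    have hrel := sqfreeCoeffs_monomial_mul_esymm k J (k - J.card)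
    rw [if_pos hdeg] at hrel
    have hhom := hdeg ▸ (isHomogeneous_monomial (1 : ℤ) (degree_sqfreeExponent J)).mul
      (isHomogeneous_esymm ℤ (k - J.card))
    rw [SetLike.mem_coe, AddMonoidHom.mem_ker, ← hrel, phi_sqfreeCoeffs,
      homogeneousComponent_eq_self hhom, Ideal.Quotient.eq_zero_iff_mem]
    exact Ideal.mul_mem_left _ _ (esymm_mem_relIdeal (by omega))

theorem range_phi : (phi n k).range = component n k := by
  refine le_antisymm ?_ ?_
  · rintro _ ⟨z, rfl⟩
    exact ⟨subsetMonomials k z, subsetMonomials_mem_homogeneousSubmodule k z,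
      (phi_apply z).symm⟩
  · rintro _ ⟨p, hp, rfl⟩
    exact ⟨sqfreeCoeffs k p, by rw [phi_sqfreeCoeffs, homogeneousComponent_eq_self hp]; rfl⟩

end RelationRing

theorem stmt0_general (n k : ℕ) :
    (phi n k).ker = relSub n k ∧ (phi n k).range = component n k :=
  ⟨ker_phi, range_phi⟩

/-- The induced map Z̄^n_k → (R_n)_{2k} is well defined and an
isomorphism of abelian groups: the kernel of φ is exactly the relations subgroup,
and the range of φ is exactly the degree-2k component of R_n. -/
theorem stmt0 (n k : ℕ) (hn : 1 ≤ n) :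
    (phi n k).ker = relSub n k ∧ (phi n k).range = component n k :=
  stmt0_general n k

end
end

section
/- Let n ≥ 1, let m be a partial matching of {1,…,2n} of cardinality k, and let J ⊆ {1,…,2n} be any subset with |J| < k. Then Σ_I f_m(I) = 0, where the sum runs over all k-element subsets I ⊆ {1,…,2n} with J ⊆ I. -/
/-!
Since the 2k entries of m are distinct and |J| < k, some pair (a, b) of m is disjoint from J.
The transposition of a and b permutes the k-subsets containing J, fixes every other pair of m
and exchanges a with b, so it negates f_m. Hence the sum equals its own negative.
-/

/-- m is a partial matching: all 2k entries of the k pairs are pairwise distinct. -/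
def isMatching (n k : ℕ) (m : Fin k → Fin (2 * n) × Fin (2 * n)) : Prop :=
  Function.Injective
    (Sum.elim (fun s => (m s).1) (fun s => (m s).2) : Fin k ⊕ Fin k → Fin (2 * n))

/-- The value f_m(I): the product of the signs ε_s if I contains exactly one element
from each pair of m, and 0 otherwise. -/
def fm (n k : ℕ) (m : Fin k → Fin (2 * n) × Fin (2 * n)) (I : Finset (Fin (2 * n))) : ℤ :=
  if ∀ s : Fin k, ((m s).1 ∈ I ∧ (m s).2 ∉ I) ∨ ((m s).1 ∉ I ∧ (m s).2 ∈ I) then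
    ∏ s : Fin k, (if (m s).1 ∈ I then (1 : ℤ) else -1)
  else 0

open Finset Function

section Matching

variable {ι α : Type*}

theorem exists_notMem_notMem_of_card_lt [Fintype ι] {f g : ι → α}
    (hfg : Injective (Sum.elim f g)) {J : Finset α} (hJ : #J < Fintype.card ι) :
    ∃ s, f s ∉ J ∧ g s ∉ J := by
  classical
  by_contra! hcover
  let pick : ι → ι ⊕ ι := fun s => if f s ∈ J then .inl s else .inr s
  have hpick : Injective pick := by
    intro s t hst
    simp only [pick] at hst
    split_ifs at hst <;> simpa using hst
  let φ : ι → J := fun s =>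
    ⟨Sum.elim f g (pick s), by
      by_cases h : f s ∈ J
      · simp [pick, h]
      · simpa [pick, h] using hcover s h⟩
  have hφ : Injective φ := fun s t hst => hpick (hfg (congrArg Subtype.val hst))
  have := Fintype.card_le_of_injective φ hφ
  simp only [Fintype.card_coe] at this
  omega

variable [DecidableEq α]

theorem prodMap_swap_self (p : α × α) :
    Prod.map (Equiv.swap p.1 p.2) (Equiv.swap p.1 p.2) p = p.swap := by
  ext <;> simp

theorem prodMap_swap_of_ne {m : ι → α × α}
    (hm : Injective (Sum.elim (fun s => (m s).1) (fun s => (m s).2))) {s t : ι} (hts : t ≠ s) :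
    Prod.map (Equiv.swap (m s).1 (m s).2) (Equiv.swap (m s).1 (m s).2) (m t) = m t := by
  ext
  · exact Equiv.swap_apply_of_ne_of_ne (hm.ne (a₁ := .inl t) (a₂ := .inl s) (by simpa using hts))
      (hm.ne (a₁ := .inl t) (a₂ := .inr s) (by simp))
  · exact Equiv.swap_apply_of_ne_of_ne (hm.ne (a₁ := .inr t) (a₂ := .inl s) (by simp))
      (hm.ne (a₁ := .inr t) (a₂ := .inr s) (by simpa using hts))

end Matching

section PairSign

variable {α : Type*} [DecidableEq α]

def pairSign (I : Finset α) (p : α × α) : ℤ :=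
  if p.1 ∈ I ∧ p.2 ∉ I then 1 else if p.1 ∉ I ∧ p.2 ∈ I then -1 else 0

theorem pairSign_swap (I : Finset α) (p : α × α) : pairSign I p.swap = -pairSign I p := by
  unfold pairSign
  split_ifs <;> simp_all

theorem pairSign_map_equiv (e : α ≃ α) (I : Finset α) (p : α × α) :
    pairSign (I.map e.toEmbedding) p = pairSign I (Prod.map e.symm e.symm p) := by
  simp [pairSign, mem_map_equiv]

end PairSign

theorem fm_eq_prod_pairSign (n k : ℕ) (m : Fin k → Fin (2 * n) × Fin (2 * n))
    (I : Finset (Fin (2 * n))) : fm n k m I = ∏ s, pairSign I (m s) := by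
  unfold fm
  split_ifs with h
  · refine prod_congr rfl fun s _ => ?_
    rcases h s with h | h <;> simp [pairSign, h]
  · obtain ⟨s, hs⟩ := not_forall.mp h
    refine (prod_eq_zero (mem_univ s) ?_).symm
    unfold pairSign
    split_ifs <;> simp_all

theorem fm_map_swap {n k : ℕ} {m : Fin k → Fin (2 * n) × Fin (2 * n)} (hm : isMatching n k m)
    (s : Fin k) (I : Finset (Fin (2 * n))) :
    fm n k m (I.map (Equiv.swap (m s).1 (m s).2).toEmbedding) = -fm n k m I := by
  simp only [fm_eq_prod_pairSign, pairSign_map_equiv, Equiv.symm_swap]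
  rw [← mul_prod_erase _ _ (mem_univ s), ← mul_prod_erase _ _ (mem_univ s),
    prodMap_swap_self, pairSign_swap, neg_mul]
  congr 2
  exact prod_congr rfl fun t ht => by rw [prodMap_swap_of_ne hm (ne_of_mem_erase ht)]

theorem stmt3_general (n k : ℕ) (m : Fin k → Fin (2 * n) × Fin (2 * n))
    (hm : isMatching n k m) (J : Finset (Fin (2 * n))) (hJ : J.card < k) :
    ∑ I ∈ (Finset.powersetCard k (Finset.univ : Finset (Fin (2 * n)))).filter
        (fun I => J ⊆ I), fm n k m I = 0 := by
  obtain ⟨s, haJ, hbJ⟩ := exists_notMem_notMem_of_card_lt hm (by simpa using hJ)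
  set e := Equiv.swap (m s).1 (m s).2
  have he_invol (I : Finset (Fin (2 * n))) : (I.map e.toEmbedding).map e.toEmbedding = I := by
    ext x; simp [e, mem_map_equiv]
  have he_mem {I} (hI : I ∈ (powersetCard k univ).filter (J ⊆ ·)) :
      I.map e.toEmbedding ∈ (powersetCard k univ).filter (J ⊆ ·) := by
    simp only [mem_filter, mem_powersetCard, card_map] at hI ⊢
    refine ⟨⟨subset_univ _, hI.1.2⟩, fun x hx => ?_⟩
    rw [mem_map_equiv, Equiv.symm_swap,
      Equiv.swap_apply_of_ne_of_ne (ne_of_mem_of_not_mem hx haJ) (ne_of_mem_of_not_mem hx hbJ)]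
    exact hI.2 hx
  have hneg : ∑ I ∈ (powersetCard k univ).filter (J ⊆ ·), fm n k m I =
      ∑ I ∈ (powersetCard k univ).filter (J ⊆ ·), -fm n k m I :=
    sum_nbij' (·.map e.toEmbedding) (·.map e.toEmbedding) (fun _ => he_mem) (fun _ => he_mem)
      (fun I _ => he_invol I) (fun I _ => he_invol I)
      (fun I _ => by rw [fm_map_swap hm, neg_neg])
  rw [sum_neg_distrib] at hneg
  omega

/-- For a partial matching m of {1,…,2n} of cardinality k and any
subset J with |J| < k, the sum of f_m(I) over all k-element subsets I containing J
vanishes. -/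
theorem stmt3 (n k : ℕ) (hn : 1 ≤ n) (m : Fin k → Fin (2 * n) × Fin (2 * n))
    (hm : isMatching n k m) (J : Finset (Fin (2 * n))) (hJ : J.card < k) :
    ∑ I ∈ (Finset.powersetCard k (Finset.univ : Finset (Fin (2 * n)))).filter
        (fun I => J ⊆ I), fm n k m I = 0 :=
  stmt3_general n k m hm J hJ
end

section
/- Let n ≥ 1 and 0 ≤ k ≤ n. Suppose an integer a_I is given for each admissible k-element subset I ⊆ {1,…,2n}, and that Σ_I a_I f_m(I) = 0 (sum over all admissible k-element subsets I) for every partial matching m of {1,…,2n} of cardinality k. Then a_I = 0 for every admissible k-element subset I. -/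
/-- Admissibility: |I ∩ {1,…,m}| ≤ m/2 for all m = 1,…,2n. -/
def admissible (n : ℕ) (I : Finset (Fin (2 * n))) : Prop :=
  ∀ m ∈ Finset.Icc 1 (2 * n), 2 * (I.filter fun i : Fin (2 * n) => (i : ℕ) + 1 ≤ m).card ≤ m

instance (n : ℕ) : DecidablePred (admissible n) := fun I => by
  unfold admissible; infer_instance

/-!
Each admissible `I` carries a matching `m_I` that pairs every `i ∈ I` with a smaller element
outside `I`: admissibility says that below each `i ∈ I` there are at least as many elements
outside `I` as elements of `I` up to `i`, which is Hall's condition. Then `f_{m_I}(I) = 1`,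
and any other `k`-set `J` with `f_{m_I}(J) ≠ 0` picks one element from each pair, hence has a
strictly smaller sum of elements than `I`. The system `Σ_J a_J f_{m_I}(J) = 0` is therefore
unitriangular with respect to this sum, and all `a_I` vanish by induction.
-/

open Finset

theorem eq_zero_of_unitriangular {ι R α : Type*} [Semiring R] [Preorder α]
    [WellFoundedLT α] (S : Finset ι) (w : ι → α) (a : ι → R)
    (h : ∀ I ∈ S, ∃ g : ι → R, g I = 1 ∧ (∀ J ∈ S, J ≠ I → g J ≠ 0 → w J < w I) ∧
      ∑ J ∈ S, a J * g J = 0) :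
    ∀ I ∈ S, a I = 0 := by
  suffices H : ∀ x, ∀ I ∈ S, w I = x → a I = 0 from fun I hI => H _ I hI rfl
  intro x
  induction x using WellFoundedLT.induction with
  | _ x IH =>
    rintro I hI rfl
    obtain ⟨g, hgI, hlower, hsum⟩ := h I hI
    have hrest : ∀ J ∈ S, J ≠ I → a J * g J = 0 := by
      intro J hJ hne
      by_cases hgJ : g J = 0
      · rw [hgJ, mul_zero]
      · rw [IH _ (hlower J hJ hne hgJ) J hJ rfl, zero_mul]
    rwa [sum_eq_single_of_mem I hI hrest, hgI, mul_one] at hsum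

section Matching

variable {n k : ℕ}

theorem card_Iic_inter_le_card_Iio_sdiff {I : Finset (Fin (2 * n))} (hI : admissible n I)
    {i : Fin (2 * n)} (hi : i ∈ I) : #(Iic i ∩ I) ≤ #(Iio i \ I) := by
  have hadm := hI (i + 1) (mem_Icc.mpr ⟨by omega, i.isLt⟩)
  have hfilter : I.filter (fun j : Fin (2 * n) => (j : ℕ) + 1 ≤ i + 1) = Iic i ∩ I := by
    ext j
    simp only [mem_filter, mem_inter, mem_Iic, Fin.le_def, Nat.add_le_add_iff_right, and_comm]
  have hIic : #(Iic i ∩ I) = #(Iio i ∩ I) + 1 := by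
    rw [← Iio_insert, insert_inter_of_mem hi, card_insert_of_notMem (by simp)]
  have hIio := card_sdiff_add_card_inter (Iio i) I
  rw [Fin.card_Iio] at hIio
  rw [hfilter, hIic] at hadm
  omega

theorem exists_injective_lt_notMem_of_admissible {I : Finset (Fin (2 * n))}
    (hI : admissible n I) :
    ∃ φ : I → Fin (2 * n), Function.Injective φ ∧ ∀ i : I, φ i ∉ I ∧ φ i < i := by
  have hall : ∀ s : Finset I, #s ≤ #(s.biUnion fun i => Iio (i : Fin (2 * n)) \ I) := by
    intro s
    rcases s.eq_empty_or_nonempty with rfl | hs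
    · simp
    set i₀ := s.max' hs
    calc #s ≤ #(Iic (i₀ : Fin (2 * n)) ∩ I) :=
          card_le_card_of_injOn Subtype.val
            (fun i hi => mem_inter.mpr ⟨mem_Iic.mpr (s.le_max' i hi), i.2⟩)
            Subtype.val_injective.injOn
      _ ≤ #(Iio (i₀ : Fin (2 * n)) \ I) := card_Iic_inter_le_card_Iio_sdiff hI i₀.2
      _ ≤ _ := card_le_card (subset_biUnion_of_mem (fun i : I => Iio (i : Fin (2 * n)) \ I)
          (s.max'_mem hs))
  obtain ⟨φ, hφ, hφt⟩ := (all_card_le_biUnion_card_iff_exists_injective _).mp hall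
  exact ⟨φ, hφ, fun i => by simpa [and_comm] using hφt i⟩

theorem exists_matching_of_admissible {I : Finset (Fin (2 * n))} (hIc : #I = k)
    (hI : admissible n I) :
    ∃ m : Fin k → Fin (2 * n) × Fin (2 * n), isMatching n k m ∧
      univ.image (fun s => (m s).1) = I ∧ ∀ s, (m s).2 ∉ I ∧ (m s).2 < (m s).1 := by
  obtain ⟨φ, hφ, hφI⟩ := exists_injective_lt_notMem_of_admissible hI
  let e := (I.equivFinOfCardEq hIc).symm
  refine ⟨fun s => (e s, φ (e s)), ?_, ?_, fun s => hφI (e s)⟩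
  · refine Function.Injective.sumElim (Subtype.val_injective.comp e.injective)
      (hφ.comp e.injective) fun s t hst => (hφI (e t)).1 ?_
    simp only at hst
    exact hst ▸ (e s).2
  · ext x
    simp only [mem_image, mem_univ, true_and]
    exact ⟨fun ⟨s, hs⟩ => hs ▸ (e s).2, fun hx => ⟨e.symm ⟨x, hx⟩, by simp⟩⟩

theorem fm_eq_one_of_forall_fst_mem {m : Fin k → Fin (2 * n) × Fin (2 * n)}
    {I : Finset (Fin (2 * n))} (hm : ∀ s, (m s).1 ∈ I ∧ (m s).2 ∉ I) : fm n k m I = 1 := by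
  rw [fm, if_pos fun s => Or.inl (hm s)]
  exact prod_eq_one fun s _ => if_pos (hm s).1

theorem sum_val_lt_of_fm_ne_zero {m : Fin k → Fin (2 * n) × Fin (2 * n)}
    (hm : isMatching n k m) (hdesc : ∀ s, (m s).2 < (m s).1) {J : Finset (Fin (2 * n))}
    (hJ : #J = k) (hfm : fm n k m J ≠ 0) (hne : J ≠ univ.image fun s => (m s).1) :
    ∑ x ∈ J, (x : ℕ) < ∑ x ∈ univ.image (fun s => (m s).1), (x : ℕ) := by
  have hpair : ∀ s, (m s).1 ∈ J ∨ (m s).2 ∈ J := by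
    by_contra! hnot
    obtain ⟨s, hs⟩ := hnot
    exact hfm (if_neg fun hall => by rcases hall s with h | h <;> simp_all)
  let side : Fin k → Fin k ⊕ Fin k := fun s => if (m s).1 ∈ J then .inl s else .inr s
  let c : Fin k → Fin (2 * n) := fun s => if (m s).1 ∈ J then (m s).1 else (m s).2
  have hc : c = Sum.elim (fun s => (m s).1) (fun s => (m s).2) ∘ side := by
    funext s
    simp only [c, side, Function.comp_apply]
    split_ifs <;> rfl
  have hside : Function.Injective side := by
    intro s t hst
    simp only [side] at hst
    split_ifs at hst <;> simpa using hst
  have hcinj : Function.Injective c := hc ▸ hm.comp hside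
  have hcle : ∀ s, (c s : ℕ) ≤ ((m s).1 : ℕ) := fun s => by
    simp only [c]
    split_ifs
    exacts [le_rfl, (hdesc s).le]
  have hJc : J = univ.image c := by
    refine (eq_of_subset_of_card_le (fun x hx => ?_) ?_).symm
    · obtain ⟨s, -, rfl⟩ := mem_image.mp hx
      simp only [c]
      split_ifs with h
      exacts [h, (hpair s).resolve_left h]
    · rw [card_image_of_injective _ hcinj, card_univ, Fintype.card_fin, hJ]
  have hfst : Function.Injective fun s => (m s).1 := hm.comp Sum.inl_injective
  obtain ⟨s₀, hs₀⟩ : ∃ s, c s ≠ (m s).1 := by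
    by_contra! hall
    exact hne (hJc.trans (image_congr fun s _ => hall s))
  rw [hJc, sum_image hcinj.injOn, sum_image hfst.injOn]
  refine sum_lt_sum (fun s _ => hcle s) ⟨s₀, mem_univ _, ?_⟩
  simp only [c] at hs₀ ⊢
  split_ifs at hs₀ ⊢
  exacts [absurd rfl hs₀, hdesc s₀]

end Matching

theorem stmt4_general (n k : ℕ) (a : Finset (Fin (2 * n)) → ℤ)
    (h : ∀ m : Fin k → Fin (2 * n) × Fin (2 * n), isMatching n k m →
      ∑ I ∈ (Finset.powersetCard k (Finset.univ : Finset (Fin (2 * n)))).filter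
          (admissible n), a I * fm n k m I = 0) :
    ∀ I : Finset (Fin (2 * n)), I.card = k → admissible n I → a I = 0 := by
  intro I hIc hIa
  refine eq_zero_of_unitriangular _ (fun J : Finset (Fin (2 * n)) => ∑ x ∈ J, (x : ℕ)) a
    (fun I' hI' => ?_) I (mem_filter.mpr ⟨mem_powersetCard.mpr ⟨subset_univ I, hIc⟩, hIa⟩)
  simp only [mem_filter, mem_powersetCard] at hI'
  obtain ⟨m, hm, himage, hsnd⟩ := exists_matching_of_admissible hI'.1.2 hI'.2
  refine ⟨fm n k m, fm_eq_one_of_forall_fst_mem fun s => ⟨?_, (hsnd s).1⟩,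
    fun J hJ hne hfm => ?_, h m hm⟩
  · exact himage ▸ mem_image_of_mem _ (mem_univ s)
  · simp only [mem_filter, mem_powersetCard] at hJ
    rw [← himage] at hne ⊢
    exact sum_val_lt_of_fm_ne_zero hm (fun s => (hsnd s).2) hJ.1.2 hfm hne

/-- If Σ a_I f_m(I) = 0, summing over admissible k-element subsets
I, for every partial matching m of cardinality k, then a_I = 0 for every admissible
k-element subset I. -/
theorem stmt4 (n k : ℕ) (hn : 1 ≤ n) (hk : k ≤ n) (a : Finset (Fin (2 * n)) → ℤ)
    (h : ∀ m : Fin k → Fin (2 * n) × Fin (2 * n), isMatching n k m →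
      ∑ I ∈ (Finset.powersetCard k (Finset.univ : Finset (Fin (2 * n)))).filter
          (admissible n), a I * fm n k m I = 0) :
    ∀ I : Finset (Fin (2 * n)), I.card = k → admissible n I → a I = 0 :=
  stmt4_general n k a h
end

section
/- Let n ≥ 1 and let m be a partial matching of {1,…,2n} of cardinality k. Then, as a ℤ-valued function on the k-element subsets of {1,…,2n}, f_m is an integer linear combination of the functions f_{m'}, where m' ranges over the balanced partial matchings of {1,…,2n} of cardinality k. -/
/-- m is balanced: in each pair, exactly one of the two entries is odd. -/
def isBalanced (n k : ℕ) (m : Fin k → Fin (2 * n) × Fin (2 * n)) : Prop :=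
  ∀ s : Fin k, ((m s).1 : ℕ) % 2 ≠ ((m s).2 : ℕ) % 2

instance (n k : ℕ) (m : Fin k → Fin (2 * n) × Fin (2 * n)) : Decidable (isMatching n k m) := by
  unfold isMatching; infer_instance

instance (n k : ℕ) (m : Fin k → Fin (2 * n) × Fin (2 * n)) : Decidable (isBalanced n k m) := by
  unfold isBalanced; infer_instance

/-!
Write `f_m(I) = ∏ₛ (χ_I(iₛ) - χ_I(jₛ))` and induct on the number of unbalanced pairs. Let
`(i, j)` be one, both of parity `p`. If some `x` of the other parity `q` is not an entry of `m`,
then `χ(i) - χ(j) = (χ(i) - χ(x)) + (χ(x) - χ(j))` replaces `(i, j)` by the balanced pairs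
`(i, x)` and `(x, j)`. Otherwise all `n` elements of parity `q` are entries, while at most `n`
entries have parity `p`. If every unbalanced pair had parity `p`, sending each entry of parity
`q` to its partner would inject them into the entries of parity `p` other than `i`, which is
impossible. So there is an
unbalanced pair `(i', j')` of parity `q`, and
`(χi - χj)(χi' - χj') = (χi - χj')(χi' - χj) + (χi - χi')(χj - χj')`
trades both pairs for balanced pairs on the same four entries.
-/

open Finset Function

namespace PartialMatching

variable {n k : ℕ}

section General

variable {ι α R : Type*}

lemma _root_.Function.Injective.update_of_notMem_range [DecidableEq ι] {f : ι → α}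
    (hf : Injective f) (a : ι) {b : α} (hb : b ∉ Set.range f) : Injective (update f a b) := by
  intro x y h
  by_cases hx : x = a <;> by_cases hy : y = a
  · exact hx.trans hy.symm
  · rw [hx, update_self, update_of_ne hy] at h
    exact absurd ⟨y, h.symm⟩ hb
  · rw [hy, update_self, update_of_ne hx] at h
    exact absurd ⟨x, h⟩ hb
  · rw [update_of_ne hx, update_of_ne hy] at h
    exact hf h

lemma _root_.Fintype.prod_add_prod_eq_of_eq_off [Fintype ι] [DecidableEq ι] [CommSemiring R]
    {f g h : ι → R} (t : Finset ι) (hf : ∀ i ∉ t, f i = h i) (hg : ∀ i ∉ t, g i = h i)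
    (ht : ∏ i ∈ t, f i + ∏ i ∈ t, g i = ∏ i ∈ t, h i) :
    ∏ i, f i + ∏ i, g i = ∏ i, h i := by
  rw [← prod_mul_prod_compl t f, ← prod_mul_prod_compl t g, ← prod_mul_prod_compl t h,
    prod_congr rfl fun i hi => hf i (mem_compl.1 hi),
    prod_congr rfl fun i hi => hg i (mem_compl.1 hi), ← add_mul, ht]

def ofEntries (E : ι ⊕ ι → α) : ι → α × α := fun s => (E (.inl s), E (.inr s))

def pairSign [DecidableEq α] (I : Finset α) (p : α × α) : ℤ :=
  (if p.1 ∈ I then 1 else 0) - (if p.2 ∈ I then 1 else 0)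

lemma pairSign_add_pairSign [DecidableEq α] (I : Finset α) (a b c : α) :
    pairSign I (a, b) + pairSign I (b, c) = pairSign I (a, c) := by
  simp only [pairSign]
  ring

lemma pairSign_mul_pairSign [DecidableEq α] (I : Finset α) (a b c d : α) :
    pairSign I (a, d) * pairSign I (c, b) + pairSign I (a, c) * pairSign I (b, d) =
      pairSign I (a, b) * pairSign I (c, d) := by
  simp only [pairSign]
  ring

end General

lemma isMatching_ofEntries {E : Fin k ⊕ Fin k → Fin (2 * n)} :
    isMatching n k (ofEntries E) ↔ Injective E :=
  iff_of_eq (congrArg Injective (Sum.elim_comp_inl_inr E))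

lemma fm_eq_prod_pairSign (m : Fin k → Fin (2 * n) × Fin (2 * n)) (I : Finset (Fin (2 * n))) :
    fm n k m I = ∏ s, pairSign I (m s) := by
  unfold fm
  split_ifs with h
  · refine prod_congr rfl fun s _ => ?_
    rcases h s with ⟨h1, h2⟩ | ⟨h1, h2⟩ <;> simp [pairSign, h1, h2]
  · push Not at h
    obtain ⟨s, hs⟩ := h
    refine (prod_eq_zero (mem_univ s) ?_).symm
    by_cases h1 : (m s).1 ∈ I <;> by_cases h2 : (m s).2 ∈ I <;> simp_all [pairSign]

lemma fm_add_fm_eq_of_eq_off {m m₁ m₂ : Fin k → Fin (2 * n) × Fin (2 * n)} (t : Finset (Fin k))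
    (h₁ : ∀ s ∉ t, m₁ s = m s) (h₂ : ∀ s ∉ t, m₂ s = m s)
    (ht : ∀ I, ∏ s ∈ t, pairSign I (m₁ s) + ∏ s ∈ t, pairSign I (m₂ s) =
      ∏ s ∈ t, pairSign I (m s)) :
    fm n k m₁ + fm n k m₂ = fm n k m := by
  funext I
  simp only [Pi.add_apply, fm_eq_prod_pairSign]
  exact Fintype.prod_add_prod_eq_of_eq_off t (fun s hs => by rw [h₁ s hs])
    (fun s hs => by rw [h₂ s hs]) (ht I)

def unbalanced (m : Fin k → Fin (2 * n) × Fin (2 * n)) : Finset (Fin k) :=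
  univ.filter fun s => ((m s).1 : ℕ) % 2 = ((m s).2 : ℕ) % 2

@[simp]
lemma mem_unbalanced {m : Fin k → Fin (2 * n) × Fin (2 * n)} {s : Fin k} :
    s ∈ unbalanced m ↔ ((m s).1 : ℕ) % 2 = ((m s).2 : ℕ) % 2 := by
  simp [unbalanced]

lemma isBalanced_iff_unbalanced_eq_empty {m : Fin k → Fin (2 * n) × Fin (2 * n)} :
    isBalanced n k m ↔ unbalanced m = ∅ := by
  simp [isBalanced, eq_empty_iff_forall_notMem]

lemma unbalanced_ssubset_of_eq_off {m m' : Fin k → Fin (2 * n) × Fin (2 * n)} {t : Finset (Fin k)}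
    (hoff : ∀ s ∉ t, m' s = m s) (hbal : ∀ s ∈ t, s ∉ unbalanced m') {s₀ : Fin k}
    (hs₀t : s₀ ∈ t) (hs₀ : s₀ ∈ unbalanced m) : unbalanced m' ⊂ unbalanced m := by
  have hsub : unbalanced m' ⊆ unbalanced m := fun s hs => by
    have hst : s ∉ t := fun h => hbal s h hs
    simpa only [mem_unbalanced, hoff s hst] using hs
  exact (ssubset_iff_of_subset hsub).2 ⟨s₀, hs₀, hbal s₀ hs₀t⟩

lemma card_filter_mod_two_eq {r : ℕ} (hr : r < 2) :
    #(univ.filter fun x : Fin (2 * n) => (x : ℕ) % 2 = r) = n := by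
  conv_rhs => rw [← card_fin n]
  refine (card_bij (fun i _ => ⟨2 * i + r, by omega⟩) ?_ ?_ ?_).symm
  · intro i _
    simp only [mem_filter, mem_univ, true_and]
    omega
  · intro i _ j _ h
    simp only [Fin.mk.injEq] at h
    exact Fin.ext (by omega)
  · intro x hx
    simp only [mem_filter, mem_univ, true_and] at hx
    exact ⟨⟨x / 2, by omega⟩, mem_univ _, Fin.ext (by dsimp only; omega)⟩

lemma exists_unbalanced_parity_ne_of_forall_mem_range {E : Fin k ⊕ Fin k → Fin (2 * n)}
    (hE : Injective E) {s₀ : Fin k} (hs₀ : s₀ ∈ unbalanced (ofEntries E))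
    (hrange : ∀ x : Fin (2 * n), (x : ℕ) % 2 ≠ (E (.inl s₀) : ℕ) % 2 → x ∈ Set.range E) :
    ∃ s₁ ∈ unbalanced (ofEntries E), (E (.inl s₁) : ℕ) % 2 ≠ (E (.inl s₀) : ℕ) % 2 := by
  set p := (E (.inl s₀) : ℕ) % 2 with hp
  simp only [mem_unbalanced, ofEntries] at hs₀
  by_contra! hsame
  set Pp := univ.filter fun pos => (E pos : ℕ) % 2 = p
  set Pq := univ.filter fun pos => (E pos : ℕ) % 2 ≠ p
  have hPp : #Pp ≤ n := by
    rw [← card_filter_mod_two_eq (n := n) (r := p) (by omega)]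
    exact card_le_card_of_injOn E (fun pos hpos => by simpa [Pp] using hpos) hE.injOn
  have hPq : n ≤ #Pq := by
    rw [← card_filter_mod_two_eq (n := n) (r := 1 - p) (by omega)]
    refine card_le_card_of_surjOn E fun x hx => ?_
    simp only [coe_filter, mem_univ, true_and, Set.mem_ofPred_eq] at hx
    obtain ⟨pos, rfl⟩ := hrange x (by omega)
    exact ⟨pos, by simp only [Pq, mem_coe, mem_filter, mem_univ, true_and]; omega, rfl⟩
  -- the partner of an entry of the minority parity lies in a balanced pair
  -- a pair with an entry of parity `≠ p` is balanced, as all unbalanced pairs have parity `p`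
  have hswap : ∀ pos ∈ Pq, pos.swap ∈ Pp.erase (.inl s₀) := by
    rintro (s | s) hpos
    all_goals
      have := hsame s
      simp only [mem_unbalanced, ofEntries] at this
      simp only [Pp, Pq, mem_filter, mem_erase, mem_univ, true_and, ne_eq, Sum.swap_inl,
        Sum.swap_inr, Sum.inl.injEq, reduceCtorEq, not_false_eq_true] at hpos ⊢
    · omega
    · exact ⟨by rintro rfl; omega, by omega⟩
  have hlt : #Pq < #Pp :=
    (card_le_card_of_injOn Sum.swap (fun pos h => hswap pos h) Sum.swap_leftInverse.injective.injOn).trans_lt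
      (card_erase_lt_of_mem (by simp [Pp, hp]))
  omega

def IsSplit (E E₁ E₂ : Fin k ⊕ Fin k → Fin (2 * n)) : Prop :=
  Injective E₁ ∧ Injective E₂ ∧
    unbalanced (ofEntries E₁) ⊂ unbalanced (ofEntries E) ∧
    unbalanced (ofEntries E₂) ⊂ unbalanced (ofEntries E) ∧
    fm n k (ofEntries E₁) + fm n k (ofEntries E₂) = fm n k (ofEntries E)

lemma isSplit_of_eq_off {E E₁ E₂ : Fin k ⊕ Fin k → Fin (2 * n)} (t : Finset (Fin k))
    {s₀ : Fin k} (hs₀t : s₀ ∈ t) (hs₀ : s₀ ∈ unbalanced (ofEntries E))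
    (h₁ : Injective E₁) (h₂ : Injective E₂)
    (hoff₁ : ∀ s ∉ t, ofEntries E₁ s = ofEntries E s)
    (hoff₂ : ∀ s ∉ t, ofEntries E₂ s = ofEntries E s)
    (hbal₁ : ∀ s ∈ t, s ∉ unbalanced (ofEntries E₁))
    (hbal₂ : ∀ s ∈ t, s ∉ unbalanced (ofEntries E₂))
    (hprod : ∀ I, ∏ s ∈ t, pairSign I (ofEntries E₁ s) + ∏ s ∈ t, pairSign I (ofEntries E₂ s) =
      ∏ s ∈ t, pairSign I (ofEntries E s)) :
    IsSplit E E₁ E₂ :=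
  ⟨h₁, h₂, unbalanced_ssubset_of_eq_off hoff₁ hbal₁ hs₀t hs₀,
    unbalanced_ssubset_of_eq_off hoff₂ hbal₂ hs₀t hs₀, fm_add_fm_eq_of_eq_off t hoff₁ hoff₂ hprod⟩

lemma isSplit_update_of_notMem_range {E : Fin k ⊕ Fin k → Fin (2 * n)} (hE : Injective E)
    {s₀ : Fin k} (hs₀ : s₀ ∈ unbalanced (ofEntries E)) {x : Fin (2 * n)}
    (hx : x ∉ Set.range E) (hpx : (x : ℕ) % 2 ≠ (E (.inl s₀) : ℕ) % 2) :
    IsSplit E (update E (.inr s₀) x) (update E (.inl s₀) x) := by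
  refine isSplit_of_eq_off {s₀} (mem_singleton_self s₀) hs₀
    (hE.update_of_notMem_range _ hx) (hE.update_of_notMem_range _ hx) ?_ ?_ ?_ ?_ ?_
  all_goals simp only [mem_unbalanced, ofEntries] at hs₀
  · intro s hs
    simp_all [ofEntries]
  · intro s hs
    simp_all [ofEntries]
  · intro s hs
    simp_all [ofEntries]
    omega
  · intro s hs
    simp_all [ofEntries]
  · intro I
    simpa [ofEntries] using pairSign_add_pairSign I (E (.inl s₀)) x (E (.inr s₀))

lemma isSplit_swap {E : Fin k ⊕ Fin k → Fin (2 * n)} (hE : Injective E) {s₀ s₁ : Fin k}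
    (hs₀ : s₀ ∈ unbalanced (ofEntries E)) (hs₁ : s₁ ∈ unbalanced (ofEntries E))
    (hp : (E (.inl s₁) : ℕ) % 2 ≠ (E (.inl s₀) : ℕ) % 2) :
    IsSplit E (E ∘ Equiv.swap (.inr s₀) (.inr s₁)) (E ∘ Equiv.swap (.inr s₀) (.inl s₁)) := by
  have hne : s₀ ≠ s₁ := by
    rintro rfl
    exact hp rfl
  refine isSplit_of_eq_off {s₀, s₁} (mem_insert_self _ _) hs₀
    (hE.comp (Equiv.injective _)) (hE.comp (Equiv.injective _)) ?_ ?_ ?_ ?_ ?_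
  all_goals simp only [mem_unbalanced, ofEntries] at hs₀ hs₁
  · intro s hs
    simp_all [ofEntries, Equiv.swap_apply_def]
  · intro s hs
    simp_all [ofEntries, Equiv.swap_apply_def]
  · intro s hs
    simp only [mem_insert, mem_singleton] at hs
    rcases hs with rfl | rfl <;> simp [ofEntries, Equiv.swap_apply_def] <;> omega
  · intro s hs
    simp only [mem_insert, mem_singleton] at hs
    rcases hs with rfl | rfl <;> simp [ofEntries, Equiv.swap_apply_def, hne, hne.symm] <;> omega
  · intro I
    rw [prod_pair hne, prod_pair hne, prod_pair hne]
    simpa [ofEntries, Equiv.swap_apply_def, hne, hne.symm] using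
      pairSign_mul_pairSign I (E (.inl s₀)) (E (.inr s₀)) (E (.inl s₁)) (E (.inr s₁))

lemma exists_isSplit {E : Fin k ⊕ Fin k → Fin (2 * n)} (hE : Injective E) {s₀ : Fin k}
    (hs₀ : s₀ ∈ unbalanced (ofEntries E)) : ∃ E₁ E₂, IsSplit E E₁ E₂ := by
  by_cases hfree : ∃ x : Fin (2 * n), (x : ℕ) % 2 ≠ (E (.inl s₀) : ℕ) % 2 ∧ x ∉ Set.range E
  · obtain ⟨x, hpx, hx⟩ := hfree
    exact ⟨_, _, isSplit_update_of_notMem_range hE hs₀ hx hpx⟩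
  · push Not at hfree
    obtain ⟨s₁, hs₁, hp⟩ := exists_unbalanced_parity_ne_of_forall_mem_range hE hs₀ hfree
    exact ⟨_, _, isSplit_swap hE hs₀ hs₁ hp⟩

def balancedSpan (n k : ℕ) : Submodule ℤ (Finset (Fin (2 * n)) → ℤ) :=
  Submodule.span ℤ (Set.range fun m : {m // isMatching n k m ∧ isBalanced n k m} => fm n k m)

theorem fm_ofEntries_mem_balancedSpan {E : Fin k ⊕ Fin k → Fin (2 * n)} (hE : Injective E) :
    fm n k (ofEntries E) ∈ balancedSpan n k := by
  rcases (unbalanced (ofEntries E)).eq_empty_or_nonempty with hbal | ⟨s₀, hs₀⟩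
  · exact Submodule.subset_span
      ⟨⟨ofEntries E, isMatching_ofEntries.2 hE, isBalanced_iff_unbalanced_eq_empty.2 hbal⟩, rfl⟩
  · obtain ⟨E₁, E₂, h₁, h₂, hlt₁, hlt₂, hsum⟩ := exists_isSplit hE hs₀
    have := card_lt_card hlt₁
    have := card_lt_card hlt₂
    rw [← hsum]
    exact add_mem (fm_ofEntries_mem_balancedSpan h₁) (fm_ofEntries_mem_balancedSpan h₂)
termination_by #(unbalanced (ofEntries E))

lemma exists_coeff_of_mem_balancedSpan {f : Finset (Fin (2 * n)) → ℤ}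
    (hf : f ∈ balancedSpan n k) :
    ∃ c : (Fin k → Fin (2 * n) × Fin (2 * n)) → ℤ, ∀ I, f I =
      ∑ m ∈ univ.filter (fun m => isMatching n k m ∧ isBalanced n k m), c m * fm n k m I := by
  obtain ⟨c, rfl⟩ := (Submodule.mem_span_range_iff_exists_fun ℤ).1 hf
  refine ⟨fun m => if h : isMatching n k m ∧ isBalanced n k m then c ⟨m, h⟩ else 0, fun I => ?_⟩
  rw [Finset.sum_apply, sum_subtype (univ.filter _)
    (p := fun m => isMatching n k m ∧ isBalanced n k m) (F := inferInstance) (by simp)]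
  exact sum_congr rfl fun m _ => by simp [m.2]

end PartialMatching

theorem stmt5_general (n k : ℕ) (m : Fin k → Fin (2 * n) × Fin (2 * n))
    (hm : isMatching n k m) :
    ∃ c : (Fin k → Fin (2 * n) × Fin (2 * n)) → ℤ,
      ∀ I : Finset (Fin (2 * n)), I.card = k →
        fm n k m I =
          ∑ m' ∈ Finset.univ.filter
              (fun m' : Fin k → Fin (2 * n) × Fin (2 * n) =>
                isMatching n k m' ∧ isBalanced n k m'),
            c m' * fm n k m' I := by
  obtain ⟨c, hc⟩ := PartialMatching.exists_coeff_of_mem_balancedSpan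
    (PartialMatching.fm_ofEntries_mem_balancedSpan hm)
  exact ⟨c, fun I _ => hc I⟩

/-- Every f_m, for m a partial matching of cardinality k, is, as a
ℤ-valued function on k-element subsets, an integer linear combination of the f_{m'}
over balanced partial matchings m' of cardinality k. -/
theorem stmt5 (n k : ℕ) (hn : 1 ≤ n) (m : Fin k → Fin (2 * n) × Fin (2 * n))
    (hm : isMatching n k m) :
    ∃ c : (Fin k → Fin (2 * n) × Fin (2 * n)) → ℤ,
      ∀ I : Finset (Fin (2 * n)), I.card = k →
        fm n k m I =
          ∑ m' ∈ Finset.univ.filter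
              (fun m' : Fin k → Fin (2 * n) × Fin (2 * n) =>
                isMatching n k m' ∧ isBalanced n k m'),
            c m' * fm n k m' I :=
  stmt5_general n k m hm
end

section
/- For every n ≥ 1 and every 0 ≤ k ≤ n, the number of admissible k-element subsets of {1,…,2n} equals C(2n,k) − C(2n,k−1) (with the convention C(2n,−1) = 0). Moreover, there are no admissible subsets of {1,…,2n} of cardinality greater than n. -/
/-!
André's reflection principle. Call `m` a violation of `I ⊆ Fin N` if more than half of the
first `m` positions lie in `I`. At the first violation `m`, exactly `(m + 1) / 2` of them do, so
complementing `I` from position `m` on turns a `k`-set into an `(N + 1 - k)`-set and keeps `m`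
as its first violation. This involution matches the `k`-sets having a violation with all
`(N + 1 - k)`-sets, each of which violates at `m = N` when `2k ≤ N + 1`. Hence
`C(N, k) - C(N, N + 1 - k)` of the `k`-sets have no violation; for `N = 2n` this is
`C(2n, k) - C(2n, k - 1)`.
-/

open Finset
open scoped symmDiff

lemma Fin.card_filter_le_val {N : ℕ} (m : ℕ) : #{i : Fin N | m ≤ i.val} = N - m := by
  have := card_filter_add_card_filter_not (s := (univ : Finset (Fin N))) (fun i => i.val < m)
  simp only [Fin.card_filter_val_lt, not_lt, card_univ, Fintype.card_fin] at this
  omega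

namespace Ballot

variable {N : ℕ}

def prefixCard (I : Finset (Fin N)) (m : ℕ) : ℕ := #{i ∈ I | i.val < m}

lemma prefixCard_zero (I : Finset (Fin N)) : prefixCard I 0 = 0 := by
  simp [prefixCard]

lemma prefixCard_of_le (I : Finset (Fin N)) {m : ℕ} (h : N ≤ m) : prefixCard I m = #I := by
  rw [prefixCard, filter_true_of_mem fun i _ => i.isLt.trans_le h]

lemma prefixCard_succ_le (I : Finset (Fin N)) (m : ℕ) :
    prefixCard I (m + 1) ≤ prefixCard I m + 1 := by
  have hsplit : {i ∈ I | i.val < m + 1} ⊆ {i ∈ I | i.val < m} ∪ {i ∈ I | i.val = m} := by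
    intro i
    simp only [mem_filter, mem_union, Nat.lt_succ_iff_lt_or_eq]
    tauto
  have hsingle : #{i ∈ I | i.val = m} ≤ 1 :=
    card_le_one.mpr fun a ha b hb => Fin.ext ((mem_filter.mp ha).2.trans (mem_filter.mp hb).2.symm)
  calc prefixCard I (m + 1) ≤ #({i ∈ I | i.val < m} ∪ {i ∈ I | i.val = m}) :=
        card_le_card hsplit
    _ ≤ prefixCard I m + #{i ∈ I | i.val = m} := card_union_le _ _
    _ ≤ prefixCard I m + 1 := by omega

def IsBallot (I : Finset (Fin N)) : Prop := ∀ m, 2 * prefixCard I m ≤ m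

lemma IsBallot.two_mul_card_le {I : Finset (Fin N)} (hI : IsBallot I) : 2 * #I ≤ N :=
  prefixCard_of_le I le_rfl ▸ hI N

lemma not_isBallot_iff {I : Finset (Fin N)} : ¬ IsBallot I ↔ ∃ m, m < 2 * prefixCard I m := by
  simp only [IsBallot, not_forall, not_le]

def reflect (m : ℕ) (I : Finset (Fin N)) : Finset (Fin N) :=
  I ∆ ({i | m ≤ i.val} : Finset (Fin N))

lemma reflect_reflect (m : ℕ) (I : Finset (Fin N)) : reflect m (reflect m I) = I :=
  symmDiff_symmDiff_cancel_right _ _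

lemma prefixCard_reflect_of_le {j m : ℕ} (h : j ≤ m) (I : Finset (Fin N)) :
    prefixCard (reflect m I) j = prefixCard I j := by
  unfold prefixCard reflect
  congr 1
  ext i
  simp only [mem_filter, mem_symmDiff, mem_univ, true_and]
  have : ¬ m ≤ i.val ∨ ¬ i.val < j := by omega
  tauto

lemma card_reflect {m : ℕ} (hm : m ≤ N) (I : Finset (Fin N)) :
    #(reflect m I) + #I + m = 2 * prefixCard I m + N := by
  set U : Finset (Fin N) := {i | m ≤ i.val}
  have hU : #U = N - m := Fin.card_filter_le_val m
  have hIU : #(I ∩ U) + prefixCard I m = #I := by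
    rw [inter_filter, inter_univ, add_comm, prefixCard]
    simpa only [not_lt] using card_filter_add_card_filter_not (s := I) (fun i => i.val < m)
  have hsymm : #(I ∆ U) + #(I ∩ U) = #(I ∪ U) := by
    rw [symmDiff_eq_sup_sdiff_inf]
    exact card_sdiff_add_card_eq_card inter_subset_union
  have := card_union_add_card_inter I U
  change #(I ∆ U) + #I + m = _
  omega

section FirstViolation

variable {I : Finset (Fin N)} (h : ∃ m, m < 2 * prefixCard I m)

lemma find_violation_le : Nat.find h ≤ N := by
  by_contra! hlt
  have hN : N < 2 * prefixCard I N := by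
    rw [prefixCard_of_le I le_rfl, ← prefixCard_of_le I hlt.le]
    exact (Nat.find_spec h).trans' hlt
  exact Nat.find_min h hlt hN

lemma two_mul_prefixCard_find_violation :
    2 * prefixCard I (Nat.find h) = Nat.find h + 1 := by
  have hspec := Nat.find_spec h
  obtain ⟨m, hm⟩ : ∃ m, Nat.find h = m + 1 := by
    refine Nat.exists_eq_succ_of_ne_zero fun h0 => ?_
    rw [h0, prefixCard_zero] at hspec
    omega
  have hmin := Nat.find_min h (show m < Nat.find h by omega)
  have hstep := prefixCard_succ_le I m
  rw [hm] at hspec ⊢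
  omega

lemma exists_violation_reflect_find : ∃ m, m < 2 * prefixCard (reflect (Nat.find h) I) m :=
  ⟨Nat.find h, by rw [prefixCard_reflect_of_le le_rfl]; exact Nat.find_spec h⟩

lemma find_violation_reflect (h' : ∃ m, m < 2 * prefixCard (reflect (Nat.find h) I) m) :
    Nat.find h' = Nat.find h := by
  refine le_antisymm (Nat.find_le ?_) ((Nat.le_find_iff _ _).mpr fun j hj => ?_)
  · rw [prefixCard_reflect_of_le le_rfl]
    exact Nat.find_spec h
  · rw [prefixCard_reflect_of_le hj.le]
    exact Nat.find_min h hj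

end FirstViolation

open Classical in
noncomputable def reflectAtFirstViolation (I : Finset (Fin N)) : Finset (Fin N) :=
  if h : ∃ m, m < 2 * prefixCard I m then reflect (Nat.find h) I else I

lemma reflectAtFirstViolation_of_exists {I : Finset (Fin N)} (h : ∃ m, m < 2 * prefixCard I m) :
    reflectAtFirstViolation I = reflect (Nat.find h) I :=
  dif_pos h

lemma reflectAtFirstViolation_involutive :
    Function.Involutive (reflectAtFirstViolation (N := N)) := by
  intro I
  by_cases h : ∃ m, m < 2 * prefixCard I m
  · have h' := exists_violation_reflect_find h
    rw [reflectAtFirstViolation_of_exists h, reflectAtFirstViolation_of_exists h',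
      find_violation_reflect h h', reflect_reflect]
  · unfold reflectAtFirstViolation
    rw [dif_neg h, dif_neg h]

lemma exists_violation_reflectAtFirstViolation {I : Finset (Fin N)}
    (h : ∃ m, m < 2 * prefixCard I m) :
    ∃ m, m < 2 * prefixCard (reflectAtFirstViolation I) m := by
  rw [reflectAtFirstViolation_of_exists h]
  exact exists_violation_reflect_find h

lemma card_reflectAtFirstViolation {I : Finset (Fin N)} (h : ∃ m, m < 2 * prefixCard I m) :
    #(reflectAtFirstViolation I) + #I = N + 1 := by
  have := card_reflect (find_violation_le h) I
  rw [two_mul_prefixCard_find_violation h] at this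
  rw [reflectAtFirstViolation_of_exists h]
  omega

open Classical in
theorem card_powersetCard_filter_exists_violation {k : ℕ} (hk : 2 * k ≤ N + 1) :
    #{I ∈ powersetCard k (univ : Finset (Fin N)) | ∃ m, m < 2 * prefixCard I m} =
      N.choose (N + 1 - k) := by
  rw [show N.choose (N + 1 - k) = #(powersetCard (N + 1 - k) (univ : Finset (Fin N))) by simp]
  refine card_nbij' reflectAtFirstViolation reflectAtFirstViolation ?_ ?_
    (fun I _ => reflectAtFirstViolation_involutive I)
    (fun J _ => reflectAtFirstViolation_involutive J)
  · intro I hI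
    rw [mem_coe, mem_filter, mem_powersetCard_univ] at hI
    have := card_reflectAtFirstViolation hI.2
    rw [mem_coe, mem_powersetCard_univ]
    omega
  · intro J hJ
    rw [mem_coe, mem_powersetCard_univ] at hJ
    have hviol : ∃ m, m < 2 * prefixCard J m :=
      ⟨N, by rw [prefixCard_of_le J le_rfl]; omega⟩
    have := card_reflectAtFirstViolation hviol
    rw [mem_coe, mem_filter, mem_powersetCard_univ]
    exact ⟨by omega, exists_violation_reflectAtFirstViolation hviol⟩

open Classical in
theorem card_powersetCard_filter_isBallot {k : ℕ} (hk : 2 * k ≤ N + 1) :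
    #{I ∈ powersetCard k (univ : Finset (Fin N)) | IsBallot I} =
      N.choose k - N.choose (N + 1 - k) := by
  have hsplit := card_filter_add_card_filter_not (s := powersetCard k (univ : Finset (Fin N)))
    IsBallot
  rw [filter_congr fun I _ => not_isBallot_iff, card_powersetCard_filter_exists_violation hk,
    card_powersetCard, card_univ, Fintype.card_fin] at hsplit
  exact Nat.eq_sub_of_add_eq hsplit

end Ballot

open Ballot

lemma admissible_iff_isBallot (n : ℕ) (I : Finset (Fin (2 * n))) :
    admissible n I ↔ IsBallot I := by
  refine ⟨fun h => ?_, fun h m _ => h m⟩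
  have hle : ∀ m ≤ 2 * n, 2 * prefixCard I m ≤ m := by
    intro m hm
    rcases Nat.eq_zero_or_pos m with rfl | hpos
    · simp [prefixCard_zero]
    · exact h m (mem_Icc.mpr ⟨hpos, hm⟩)
  intro m
  rcases le_or_gt m (2 * n) with hm | hm
  · exact hle m hm
  · have := hle _ le_rfl
    rw [prefixCard_of_le I le_rfl] at this
    rw [prefixCard_of_le I hm.le]
    omega

lemma Nat.choose_succ_sub_eq {N k : ℕ} (hk : k ≤ N + 1) :
    N.choose (N + 1 - k) = if k = 0 then 0 else N.choose (k - 1) := by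
  split_ifs with h0
  · subst h0
    exact Nat.choose_eq_zero_of_lt (Nat.lt_succ_self N)
  · rw [show N + 1 - k = N - (k - 1) by omega, Nat.choose_symm (by omega)]

theorem stmt7_general (n : ℕ) :
    (∀ k : ℕ, k ≤ n →
      ((Finset.powersetCard k (Finset.univ : Finset (Fin (2 * n)))).filter
          (admissible n)).card
        = Nat.choose (2 * n) k - (if k = 0 then 0 else Nat.choose (2 * n) (k - 1))) ∧
    (∀ I : Finset (Fin (2 * n)), admissible n I → I.card ≤ n) := by
  refine ⟨fun k hk => ?_, fun I hI => ?_⟩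
  · classical
    rw [filter_congr fun I _ => admissible_iff_isBallot n I,
      card_powersetCard_filter_isBallot (by omega), Nat.choose_succ_sub_eq (by omega)]
  · have := ((admissible_iff_isBallot n I).mp hI).two_mul_card_le
    omega

/-- The number of admissible k-element subsets of {1,…,2n} equals
C(2n,k) − C(2n,k−1) for every 0 ≤ k ≤ n, and every admissible subset has cardinality
at most n. -/
theorem stmt7 (n : ℕ) (hn : 1 ≤ n) :
    (∀ k : ℕ, k ≤ n →
      ((Finset.powersetCard k (Finset.univ : Finset (Fin (2 * n)))).filter
          (admissible n)).card
        = Nat.choose (2 * n) k - (if k = 0 then 0 else Nat.choose (2 * n) (k - 1))) ∧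
    (∀ I : Finset (Fin (2 * n)), admissible n I → I.card ≤ n) :=
  stmt7_general n
end

section
/- Let n ≥ 0, let S = ℤ[X_1,…,X_{2n+1}]/(X_1²,…,X_{2n+1}²), graded with deg X_i = 2, and let Q = S/J, where J is the S-ideal generated by the elements Σ_{|I|=k, I⊆{1,…,2n}} X_I for k = 1,…,2n (sums over all k-element subsets I of the first 2n indices, with X_I = ∏_{i∈I} X_i). Since J is generated by homogeneous elements, Q is a graded S-module. Then the only S-module automorphisms of Q that preserve each graded component are +identity and −identity. -/
/-!
Context: S = ℤ[X_1,…,X_{2n+1}]/(X_1²,…,X_{2n+1}²), graded with deg X_i = 2 (so the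
degree-2k component is the image of the homogeneous polynomials of standard degree
k), and Q = S/J, where J is the S-ideal generated by the elements
Σ_{|I|=k, I⊆{1,…,2n}} X_I for k = 1,…,2n (sums over the k-element subsets of the
first 2n variables).  We model {1,…,2n+1} by Fin (2n+1), the first 2n indices being
those i with (i : ℕ) < 2n.

Statement 11:  The only S-module automorphisms of Q preserving each graded component
are +id and −id.
-/

open MvPolynomial

namespace Stmt11

noncomputable section

/-- The polynomial ring ℤ[X_1,…,X_{2n+1}]. -/
abbrev Poly (n : ℕ) := MvPolynomial (Fin (2 * n + 1)) ℤ

/-- The ideal (X_1²,…,X_{2n+1}²). -/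
def Isq (n : ℕ) : Ideal (Poly n) :=
  Ideal.span (Set.range fun i : Fin (2 * n + 1) => (X i : Poly n) ^ 2)

/-- S = ℤ[X_1,…,X_{2n+1}]/(X_1²,…,X_{2n+1}²). -/
abbrev S (n : ℕ) := Poly n ⧸ Isq n

/-- The polynomial Σ_{|I|=k, I ⊆ {1,…,2n}} X_I. -/
def symEl (n k : ℕ) : Poly n :=
  ∑ I ∈ Finset.powersetCard k
      (Finset.univ.filter fun i : Fin (2 * n + 1) => (i : ℕ) < 2 * n),
    ∏ i ∈ I, X i

/-- The S-ideal J generated by the classes of the symEl n k, k = 1,…,2n. -/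
def J (n : ℕ) : Ideal (S n) :=
  Ideal.span {s | ∃ k : ℕ, 1 ≤ k ∧ k ≤ 2 * n ∧ s = Ideal.Quotient.mk (Isq n) (symEl n k)}

/-- Q = S/J. -/
abbrev Q (n : ℕ) := S n ⧸ J n

/-- The degree-2k graded component of Q (deg X_i = 2): the image in Q of the
homogeneous polynomials of standard degree k. -/
def Qcomp (n k : ℕ) : AddSubgroup (Q n) :=
  AddSubgroup.map
    (((Ideal.Quotient.mk (J n)).comp (Ideal.Quotient.mk (Isq n))).toAddMonoidHom)
    (homogeneousSubmodule (Fin (2 * n + 1)) ℤ k).toAddSubgroup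

end

end Stmt11

/-!
An `S`-linear endomorphism of the cyclic `S`-module `Q` is multiplication by `e 1`. Preserving
the degree-0 component forces `e 1` to be an integer `m`. Evaluation at `X = 0` descends to a ring
map `Q → ℤ`, because the generators of `J` have no constant term, so surjectivity of `e` makes `m`
a unit of `ℤ`.
-/

theorem LinearMap.apply_eq_mul_apply_one {A B : Type*} [CommRing A] [CommRing B] [Algebra A B]
    (hA : Function.Surjective (algebraMap A B)) (f : B →ₗ[A] B) (x : B) : f x = x * f 1 := by
  obtain ⟨a, rfl⟩ := hA x
  rw [Algebra.algebraMap_eq_smul_one, map_smul, smul_mul_assoc, one_mul]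

theorem Int.isUnit_of_intCast_mul_eq_one {B : Type*} [Ring B] (φ : B →+* ℤ) {m : ℤ} {y : B}
    (h : (m : B) * y = 1) : IsUnit m :=
  IsUnit.of_mul_eq_one (φ y) <| by
    simpa only [map_mul, map_intCast, Int.cast_id, map_one] using congrArg φ h

namespace Stmt11

theorem constantCoeff_symEl (n : ℕ) {k : ℕ} (hk : 1 ≤ k) : constantCoeff (symEl n k) = 0 := by
  simp only [symEl, map_sum, map_prod, constantCoeff_X]
  refine Finset.sum_eq_zero fun I hI => Finset.prod_eq_zero_iff.mpr ?_
  simpa [Finset.Nonempty] using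
    Finset.card_pos.mp ((Finset.mem_powersetCard.mp hI).2 ▸ hk : 0 < I.card)

theorem isq_le_ker_constantCoeff (n : ℕ) : Isq n ≤ RingHom.ker (constantCoeff : Poly n →+* ℤ) := by
  rw [Isq, Ideal.span_le]
  rintro _ ⟨i, rfl⟩
  simp

noncomputable def augmentation (n : ℕ) : Q n →+* ℤ :=
  Ideal.Quotient.lift (J n)
    (Ideal.Quotient.lift (Isq n) constantCoeff fun _ ha => isq_le_ker_constantCoeff n ha)
    fun _ ha => by
      refine (Ideal.span_le (I := RingHom.ker _)).mpr ?_ ha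
      rintro _ ⟨k, hk, -, rfl⟩
      exact constantCoeff_symEl n hk

theorem exists_intCast_of_mem_qcomp_zero {n : ℕ} {x : Q n} (hx : x ∈ Qcomp n 0) :
    ∃ m : ℤ, x = m := by
  obtain ⟨p, hp, rfl⟩ := hx
  obtain ⟨c, rfl⟩ : ∃ c, p = C c :=
    ⟨_, totalDegree_eq_zero_iff_eq_C.mp ((totalDegree_zero_iff_isHomogeneous _).mpr hp)⟩
  exact ⟨c, by simp⟩

/-- Any S-module automorphism of Q preserving each graded
component is +identity or −identity. -/
theorem stmt11 (n : ℕ) (e : Q n ≃ₗ[S n] Q n)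
    (he : ∀ k : ℕ, ∀ x ∈ Qcomp n k, e x ∈ Qcomp n k) :
    (∀ x : Q n, e x = x) ∨ (∀ x : Q n, e x = -x) := by
  have he_mul : ∀ x, e x = x * e 1 := fun x =>
    (e : Q n →ₗ[S n] Q n).apply_eq_mul_apply_one Ideal.Quotient.mk_surjective x
  obtain ⟨m, hm⟩ := exists_intCast_of_mem_qcomp_zero
    (he 0 1 ⟨1, isHomogeneous_one _ _, by simp⟩)
  obtain ⟨y, hy⟩ := e.surjective 1
  have hmy : (m : Q n) * y = 1 := by rw [mul_comm (m : Q n), ← hm, ← he_mul, hy]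
  have hm_unit : IsUnit m := Int.isUnit_of_intCast_mul_eq_one (augmentation n) hmy
  rcases Int.isUnit_iff.mp hm_unit with rfl | rfl
  · exact Or.inl fun x => by rw [he_mul x, hm]; push_cast; ring
  · exact Or.inr fun x => by rw [he_mul x, hm]; push_cast; ring

end Stmt11
end
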